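/- arXiv:1308.2168 — 12 statements merged into one kernel-verified Lean document; each statement's English description precedes it below -/
import Mathlib

section
/- For every three-qubit state a, the determinants of the three gamma matrices coincide and equal minus Cayley's hyperdeterminant: det γ^A(a) = det γ^B(a) = det γ^C(a) = −Det a. Consequently the quartic norm q(a) := 2 det γ^A(a) satisfies q(a) = −2 Det a. -/
open scoped BigOperators

/-- A three-qubit state: a tensor with indices `A B C : Fin 2` and complex entries. -/
abbrev QState := Fin 2 → Fin 2 → Fin 2 → ℂ

/-- The antisymmetric epsilon tensor on `{0,1}` with `ε 0 1 = 1`. -/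
noncomputable def eps : Fin 2 → Fin 2 → ℂ := fun i j =>
  if i = 0 ∧ j = 1 then 1 else if i = 1 ∧ j = 0 then -1 else 0

/-- The gamma matrix associated to the first (A) slot. -/
noncomputable def gammaA (a : QState) : Matrix (Fin 2) (Fin 2) ℂ :=
  Matrix.of fun A₁ A₂ => ∑ B₁, ∑ B₂, ∑ C₁, ∑ C₂,
    eps B₁ B₂ * eps C₁ C₂ * a A₁ B₁ C₁ * a A₂ B₂ C₂

/-- The gamma matrix associated to the second (B) slot. -/
noncomputable def gammaB (a : QState) : Matrix (Fin 2) (Fin 2) ℂ :=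
  Matrix.of fun B₁ B₂ => ∑ C₁, ∑ C₂, ∑ A₁, ∑ A₂,
    eps C₁ C₂ * eps A₁ A₂ * a A₁ B₁ C₁ * a A₂ B₂ C₂

/-- The gamma matrix associated to the third (C) slot. -/
noncomputable def gammaC (a : QState) : Matrix (Fin 2) (Fin 2) ℂ :=
  Matrix.of fun C₁ C₂ => ∑ A₁, ∑ A₂, ∑ B₁, ∑ B₂,
    eps A₁ A₂ * eps B₁ B₂ * a A₁ B₁ C₁ * a A₂ B₂ C₂

/-- The (cubic) triple product `T(a)_{A₃B₁C₁} = ε^{A₁A₂} a_{A₁B₁C₁} γ^A(a)_{A₂A₃}`. -/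
noncomputable def Trip (a : QState) : QState := fun A₃ B₁ C₁ =>
  ∑ A₁, ∑ A₂, eps A₁ A₂ * a A₁ B₁ C₁ * gammaA a A₂ A₃

/-- The symplectic bilinear form `{a,b} = ε^{AA'} ε^{BB'} ε^{CC'} a_{ABC} b_{A'B'C'}`. -/
noncomputable def symp (a b : QState) : ℂ :=
  ∑ A, ∑ A', ∑ B, ∑ B', ∑ C, ∑ C',
    eps A A' * eps B B' * eps C C' * a A B C * b A' B' C'

/-- Cayley's hyperdeterminant of a three-qubit state. -/
noncomputable def CayleyDet (a : QState) : ℂ :=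
  (a 0 0 0)^2 * (a 1 1 1)^2 + (a 0 0 1)^2 * (a 1 1 0)^2
    + (a 0 1 0)^2 * (a 1 0 1)^2 + (a 0 1 1)^2 * (a 1 0 0)^2
  - 2 * ( a 0 0 0 * a 0 0 1 * a 1 1 0 * a 1 1 1
        + a 0 0 0 * a 0 1 0 * a 1 0 1 * a 1 1 1
        + a 0 0 0 * a 0 1 1 * a 1 0 0 * a 1 1 1
        + a 0 0 1 * a 0 1 0 * a 1 0 1 * a 1 1 0
        + a 0 0 1 * a 0 1 1 * a 1 0 0 * a 1 1 0
        + a 0 1 0 * a 0 1 1 * a 1 0 0 * a 1 0 1 )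
  + 4 * ( a 0 0 0 * a 0 1 1 * a 1 0 1 * a 1 1 0
        + a 0 0 1 * a 0 1 0 * a 1 0 0 * a 1 1 1 )

/-- the determinants of the three gamma matrices coincide and equal
minus Cayley's hyperdeterminant; consequently `q(a) := 2 det γ^A(a) = −2 Det a`. -/
theorem gamma_det_eq_neg_hyperdet (a : QState) :
    (gammaA a).det = (gammaB a).det ∧
    (gammaB a).det = (gammaC a).det ∧
    (gammaC a).det = - CayleyDet a ∧
    2 * (gammaA a).det = -2 * CayleyDet a := by
  have e00 : eps 0 0 = 0 := rfl
  have e01 : eps 0 1 = 1 := rfl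
  have e10 : eps 1 0 = -1 := rfl
  have e11 : eps 1 1 = 0 := rfl
  simp only [gammaA, gammaB, gammaC, Matrix.det_fin_two, Matrix.of_apply,
    Fin.sum_univ_two, e00, e01, e10, e11, CayleyDet]
  refine ⟨by ring, by ring, by ring, by ring⟩
end

section
/- Let T(x,y,z) denote the symmetric trilinear polarization of the cubic triple product map, namely T(x,y,z) = (1/6)(T(x+y+z) − T(x+y) − T(x+z) − T(y+z) + T(x) + T(y) + T(z)). Then the four-linear form q(x,y,z,w) := {T(x,y,z), w} is totally symmetric: it is invariant under every permutation of its four three-qubit-state arguments x, y, z, w. -/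
open scoped BigOperators

/-- Symmetric trilinear polarization of the cubic triple product map. -/
noncomputable def Trip3 (x y z : QState) : QState :=
  (6 : ℂ)⁻¹ • (Trip (x + y + z) - Trip (x + y) - Trip (x + z) - Trip (y + z)
    + Trip x + Trip y + Trip z)

/-! The form is symmetric in its first three arguments because `Trip3` is a polarization, and
symmetric in its last two by a direct computation; the adjacent transpositions generate `S₄`. -/

theorem apply_comp_perm_eq_of_swap_castSucc_succ {α β : Type*} {n : ℕ}
    (f : (Fin (n + 1) → α) → β)
    (hf : ∀ (i : Fin n) (v : Fin (n + 1) → α), f (v ∘ Equiv.swap i.castSucc i.succ) = f v)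
    (σ : Equiv.Perm (Fin (n + 1))) (v : Fin (n + 1) → α) : f (v ∘ σ) = f v := by
  have hσ : σ ∈ Submonoid.closure (Set.range fun i : Fin n ↦ Equiv.swap i.castSucc i.succ) := by
    rw [Equiv.Perm.mclosure_swap_castSucc_succ]
    trivial
  refine Submonoid.closure_induction
    (motive := fun (σ : Equiv.Perm (Fin (n + 1))) _ ↦ ∀ v, f (v ∘ σ) = f v)
    ?_ (fun _ ↦ rfl) ?_ hσ v
  · rintro _ ⟨i, rfl⟩
    exact hf i
  · intro σ τ _ _ hσ hτ v
    rw [Equiv.Perm.coe_mul, ← Function.comp_assoc, hτ, hσ]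

lemma Trip3_comm_left (x y z : QState) : Trip3 x y z = Trip3 y x z := by
  unfold Trip3
  rw [add_comm y x]
  congr 1
  abel

lemma Trip3_comm_right (x y z : QState) : Trip3 x y z = Trip3 x z y := by
  unfold Trip3
  rw [add_right_comm x z y, add_comm z y]
  congr 1
  abel

lemma symp_Trip3_comm (x y z w : QState) : symp (Trip3 x y z) w = symp (Trip3 x y w) z := by
  simp only [symp, Trip3, Trip, gammaA, Matrix.of_apply, Pi.smul_apply, Pi.add_apply,
    Pi.sub_apply, smul_eq_mul, Fin.sum_univ_two, eps]
  norm_num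
  ring

/-- the four-linear form `q(x,y,z,w) := {T(x,y,z), w}` is totally
symmetric: it is invariant under every permutation of its four arguments. -/
theorem quartic_form_totally_symmetric
    (σ : Equiv.Perm (Fin 4)) (v : Fin 4 → QState) :
    symp (Trip3 (v (σ 0)) (v (σ 1)) (v (σ 2))) (v (σ 3)) =
      symp (Trip3 (v 0) (v 1) (v 2)) (v 3) := by
  refine apply_comp_perm_eq_of_swap_castSucc_succ
    (fun v ↦ symp (Trip3 (v 0) (v 1) (v 2)) (v 3)) ?_ σ v
  intro i v
  fin_cases i
  · exact congrArg (symp · _) (Trip3_comm_left _ _ _)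
  · exact congrArg (symp · _) (Trip3_comm_right _ _ _)
  · exact symp_Trip3_comm _ _ _ _
end

section
/- For every three-qubit state a and all indices A₁,A₂,C₁,C₂ ∈ {0,1}, the product of gamma-matrix entries satisfies (γ^A(a))_{A₁A₂} (γ^C(a))_{C₁C₂} = Σ_{B₁,B₂} ε^{B₂B₁} a_{A₁B₁C₁} T(a)_{A₂B₂C₂} + Σ_{B₁,B₂} ε^{B₁B₂} a_{A₂B₂C₁} T(a)_{A₁B₁C₂}. -/
open scoped BigOperators

lemma eps00 : eps 0 0 = 0 := rfl
lemma eps01 : eps 0 1 = 1 := rfl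
lemma eps10 : eps 1 0 = -1 := rfl
lemma eps11 : eps 1 1 = 0 := rfl

lemma gammaA_eval (a : QState) (i j : Fin 2) :
    gammaA a i j = a i 0 0 * a j 1 1 - a i 0 1 * a j 1 0
      - a i 1 0 * a j 0 1 + a i 1 1 * a j 0 0 := by
  simp [gammaA, Fin.sum_univ_two, eps00, eps01, eps10, eps11]; ring

lemma gammaC_eval (a : QState) (i j : Fin 2) :
    gammaC a i j = a 0 0 i * a 1 1 j - a 0 1 i * a 1 0 j
      - a 1 0 i * a 0 1 j + a 1 1 i * a 0 0 j := by
  simp [gammaC, Fin.sum_univ_two, eps00, eps01, eps10, eps11]; ring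

lemma Trip_eval (a : QState) (i b c : Fin 2) :
    Trip a i b c = a 0 b c * gammaA a 1 i - a 1 b c * gammaA a 0 i := by
  simp [Trip, Fin.sum_univ_two, eps00, eps01, eps10, eps11]; ring

set_option maxHeartbeats 1000000 in
/-- the product of gamma-matrix entries satisfies
`(γ^A)_{A₁A₂} (γ^C)_{C₁C₂} = ε^{B₂B₁} a_{A₁B₁C₁} T(a)_{A₂B₂C₂}
  + ε^{B₁B₂} a_{A₂B₂C₁} T(a)_{A₁B₁C₂}`. -/
theorem gammaA_mul_gammaC_identity (a : QState) (A₁ A₂ C₁ C₂ : Fin 2) :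
    gammaA a A₁ A₂ * gammaC a C₁ C₂ =
      (∑ B₁, ∑ B₂, eps B₂ B₁ * a A₁ B₁ C₁ * Trip a A₂ B₂ C₂) +
      (∑ B₁, ∑ B₂, eps B₁ B₂ * a A₂ B₂ C₁ * Trip a A₁ B₁ C₂) := by
  fin_cases A₁ <;> fin_cases A₂ <;> fin_cases C₁ <;> fin_cases C₂ <;>
    simp only [Fin.mk_zero, Fin.mk_one, Fin.sum_univ_two, eps00, eps01, eps10,
      eps11, Trip_eval, gammaA_eval, gammaC_eval] <;> ring
end

section
/- If the triple product of a three-qubit state vanishes, T(a) = 0, then at most one of the three gamma matrices γ^A(a), γ^B(a), γ^C(a) is nonzero (i.e., at least two of them are the zero matrix). -/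
open scoped BigOperators

lemma keyAB' (a : QState) (h : Trip a = 0) :
    (gammaA a 0 0 * gammaB a 0 0 = 0) ∧
    (gammaA a 0 0 * gammaB a 0 1 = 0) ∧
    (gammaA a 0 0 * gammaB a 1 0 = 0) ∧
    (gammaA a 0 0 * gammaB a 1 1 = 0) ∧
    (gammaA a 0 1 * gammaB a 0 0 = 0) ∧
    (gammaA a 0 1 * gammaB a 0 1 = 0) ∧
    (gammaA a 0 1 * gammaB a 1 0 = 0) ∧
    (gammaA a 0 1 * gammaB a 1 1 = 0) ∧
    (gammaA a 1 0 * gammaB a 0 0 = 0) ∧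
    (gammaA a 1 0 * gammaB a 0 1 = 0) ∧
    (gammaA a 1 0 * gammaB a 1 0 = 0) ∧
    (gammaA a 1 0 * gammaB a 1 1 = 0) ∧
    (gammaA a 1 1 * gammaB a 0 0 = 0) ∧
    (gammaA a 1 1 * gammaB a 0 1 = 0) ∧
    (gammaA a 1 1 * gammaB a 1 0 = 0) ∧
    (gammaA a 1 1 * gammaB a 1 1 = 0) := by
  have h000 := congrFun (congrFun (congrFun h 0) 0) 0
  have h001 := congrFun (congrFun (congrFun h 0) 0) 1
  have h010 := congrFun (congrFun (congrFun h 0) 1) 0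
  have h011 := congrFun (congrFun (congrFun h 0) 1) 1
  have h100 := congrFun (congrFun (congrFun h 1) 0) 0
  have h101 := congrFun (congrFun (congrFun h 1) 0) 1
  have h110 := congrFun (congrFun (congrFun h 1) 1) 0
  have h111 := congrFun (congrFun (congrFun h 1) 1) 1
  simp only [Trip, gammaA, gammaB, gammaC, Matrix.of_apply, Fin.sum_univ_two,
    eps00, eps01, eps10, eps11, Pi.zero_apply] at h000 h001 h010 h011 h100 h101 h110 h111 ⊢
  exact ⟨by linear_combination ((2:ℂ) * (a 0 0 1)) * h000 + ((-2:ℂ) * (a 0 0 0)) * h001,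
    by linear_combination ((2:ℂ) * (a 0 1 1)) * h000 + ((-2:ℂ) * (a 0 1 0)) * h001,
    by linear_combination ((2:ℂ) * (a 0 1 1)) * h000 + ((-2:ℂ) * (a 0 1 0)) * h001,
    by linear_combination ((2:ℂ) * (a 0 1 1)) * h010 + ((-2:ℂ) * (a 0 1 0)) * h011,
    by linear_combination ((2:ℂ) * (a 1 0 1)) * h000 + ((-2:ℂ) * (a 1 0 0)) * h001,
    by linear_combination ((1:ℂ) * (a 1 1 1)) * h000 + ((-1:ℂ) * (a 1 1 0)) * h001 + ((1:ℂ) * (a 1 0 1)) * h010 + ((-1:ℂ) * (a 1 0 0)) * h011,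
    by linear_combination ((1:ℂ) * (a 1 1 1)) * h000 + ((-1:ℂ) * (a 1 1 0)) * h001 + ((1:ℂ) * (a 1 0 1)) * h010 + ((-1:ℂ) * (a 1 0 0)) * h011,
    by linear_combination ((2:ℂ) * (a 1 1 1)) * h010 + ((-2:ℂ) * (a 1 1 0)) * h011,
    by linear_combination ((2:ℂ) * (a 1 0 1)) * h000 + ((-2:ℂ) * (a 1 0 0)) * h001,
    by linear_combination ((1:ℂ) * (a 1 1 1)) * h000 + ((-1:ℂ) * (a 1 1 0)) * h001 + ((1:ℂ) * (a 1 0 1)) * h010 + ((-1:ℂ) * (a 1 0 0)) * h011,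
    by linear_combination ((1:ℂ) * (a 1 1 1)) * h000 + ((-1:ℂ) * (a 1 1 0)) * h001 + ((1:ℂ) * (a 1 0 1)) * h010 + ((-1:ℂ) * (a 1 0 0)) * h011,
    by linear_combination ((2:ℂ) * (a 1 1 1)) * h010 + ((-2:ℂ) * (a 1 1 0)) * h011,
    by linear_combination ((2:ℂ) * (a 1 0 1)) * h100 + ((-2:ℂ) * (a 1 0 0)) * h101,
    by linear_combination ((2:ℂ) * (a 1 1 1)) * h100 + ((-2:ℂ) * (a 1 1 0)) * h101,
    by linear_combination ((2:ℂ) * (a 1 1 1)) * h100 + ((-2:ℂ) * (a 1 1 0)) * h101,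
    by linear_combination ((2:ℂ) * (a 1 1 1)) * h110 + ((-2:ℂ) * (a 1 1 0)) * h111⟩

lemma keyAB (a : QState) (h : Trip a = 0) (i j k l : Fin 2) :
    gammaA a i j * gammaB a k l = 0 := by
  obtain ⟨p1,p2,p3,p4,p5,p6,p7,p8,p9,p10,p11,p12,p13,p14,p15,p16⟩ := keyAB' a h
  fin_cases i <;> fin_cases j <;> fin_cases k <;> fin_cases l
  exacts [p1,p2,p3,p4,p5,p6,p7,p8,p9,p10,p11,p12,p13,p14,p15,p16]

lemma keyAC' (a : QState) (h : Trip a = 0) :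
    (gammaA a 0 0 * gammaC a 0 0 = 0) ∧
    (gammaA a 0 0 * gammaC a 0 1 = 0) ∧
    (gammaA a 0 0 * gammaC a 1 0 = 0) ∧
    (gammaA a 0 0 * gammaC a 1 1 = 0) ∧
    (gammaA a 0 1 * gammaC a 0 0 = 0) ∧
    (gammaA a 0 1 * gammaC a 0 1 = 0) ∧
    (gammaA a 0 1 * gammaC a 1 0 = 0) ∧
    (gammaA a 0 1 * gammaC a 1 1 = 0) ∧
    (gammaA a 1 0 * gammaC a 0 0 = 0) ∧
    (gammaA a 1 0 * gammaC a 0 1 = 0) ∧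
    (gammaA a 1 0 * gammaC a 1 0 = 0) ∧
    (gammaA a 1 0 * gammaC a 1 1 = 0) ∧
    (gammaA a 1 1 * gammaC a 0 0 = 0) ∧
    (gammaA a 1 1 * gammaC a 0 1 = 0) ∧
    (gammaA a 1 1 * gammaC a 1 0 = 0) ∧
    (gammaA a 1 1 * gammaC a 1 1 = 0) := by
  have h000 := congrFun (congrFun (congrFun h 0) 0) 0
  have h001 := congrFun (congrFun (congrFun h 0) 0) 1
  have h010 := congrFun (congrFun (congrFun h 0) 1) 0
  have h011 := congrFun (congrFun (congrFun h 0) 1) 1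
  have h100 := congrFun (congrFun (congrFun h 1) 0) 0
  have h101 := congrFun (congrFun (congrFun h 1) 0) 1
  have h110 := congrFun (congrFun (congrFun h 1) 1) 0
  have h111 := congrFun (congrFun (congrFun h 1) 1) 1
  simp only [Trip, gammaA, gammaB, gammaC, Matrix.of_apply, Fin.sum_univ_two,
    eps00, eps01, eps10, eps11, Pi.zero_apply] at h000 h001 h010 h011 h100 h101 h110 h111 ⊢
  exact ⟨by linear_combination ((2:ℂ) * (a 0 1 0)) * h000 + ((-2:ℂ) * (a 0 0 0)) * h010,
    by linear_combination ((2:ℂ) * (a 0 1 1)) * h000 + ((-2:ℂ) * (a 0 0 1)) * h010,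
    by linear_combination ((2:ℂ) * (a 0 1 1)) * h000 + ((-2:ℂ) * (a 0 0 1)) * h010,
    by linear_combination ((2:ℂ) * (a 0 1 1)) * h001 + ((-2:ℂ) * (a 0 0 1)) * h011,
    by linear_combination ((2:ℂ) * (a 1 1 0)) * h000 + ((-2:ℂ) * (a 1 0 0)) * h010,
    by linear_combination ((1:ℂ) * (a 1 1 1)) * h000 + ((1:ℂ) * (a 1 1 0)) * h001 + ((-1:ℂ) * (a 1 0 1)) * h010 + ((-1:ℂ) * (a 1 0 0)) * h011,
    by linear_combination ((1:ℂ) * (a 1 1 1)) * h000 + ((1:ℂ) * (a 1 1 0)) * h001 + ((-1:ℂ) * (a 1 0 1)) * h010 + ((-1:ℂ) * (a 1 0 0)) * h011,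
    by linear_combination ((2:ℂ) * (a 1 1 1)) * h001 + ((-2:ℂ) * (a 1 0 1)) * h011,
    by linear_combination ((2:ℂ) * (a 1 1 0)) * h000 + ((-2:ℂ) * (a 1 0 0)) * h010,
    by linear_combination ((1:ℂ) * (a 1 1 1)) * h000 + ((1:ℂ) * (a 1 1 0)) * h001 + ((-1:ℂ) * (a 1 0 1)) * h010 + ((-1:ℂ) * (a 1 0 0)) * h011,
    by linear_combination ((1:ℂ) * (a 1 1 1)) * h000 + ((1:ℂ) * (a 1 1 0)) * h001 + ((-1:ℂ) * (a 1 0 1)) * h010 + ((-1:ℂ) * (a 1 0 0)) * h011,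
    by linear_combination ((2:ℂ) * (a 1 1 1)) * h001 + ((-2:ℂ) * (a 1 0 1)) * h011,
    by linear_combination ((2:ℂ) * (a 1 1 0)) * h100 + ((-2:ℂ) * (a 1 0 0)) * h110,
    by linear_combination ((2:ℂ) * (a 1 1 1)) * h100 + ((-2:ℂ) * (a 1 0 1)) * h110,
    by linear_combination ((2:ℂ) * (a 1 1 1)) * h100 + ((-2:ℂ) * (a 1 0 1)) * h110,
    by linear_combination ((2:ℂ) * (a 1 1 1)) * h101 + ((-2:ℂ) * (a 1 0 1)) * h111⟩

lemma keyAC (a : QState) (h : Trip a = 0) (i j k l : Fin 2) :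
    gammaA a i j * gammaC a k l = 0 := by
  obtain ⟨p1,p2,p3,p4,p5,p6,p7,p8,p9,p10,p11,p12,p13,p14,p15,p16⟩ := keyAC' a h
  fin_cases i <;> fin_cases j <;> fin_cases k <;> fin_cases l
  exacts [p1,p2,p3,p4,p5,p6,p7,p8,p9,p10,p11,p12,p13,p14,p15,p16]

lemma keyBC' (a : QState) (h : Trip a = 0) :
    (gammaB a 0 0 * gammaC a 0 0 = 0) ∧
    (gammaB a 0 0 * gammaC a 0 1 = 0) ∧
    (gammaB a 0 0 * gammaC a 1 0 = 0) ∧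
    (gammaB a 0 0 * gammaC a 1 1 = 0) ∧
    (gammaB a 0 1 * gammaC a 0 0 = 0) ∧
    (gammaB a 0 1 * gammaC a 0 1 = 0) ∧
    (gammaB a 0 1 * gammaC a 1 0 = 0) ∧
    (gammaB a 0 1 * gammaC a 1 1 = 0) ∧
    (gammaB a 1 0 * gammaC a 0 0 = 0) ∧
    (gammaB a 1 0 * gammaC a 0 1 = 0) ∧
    (gammaB a 1 0 * gammaC a 1 0 = 0) ∧
    (gammaB a 1 0 * gammaC a 1 1 = 0) ∧
    (gammaB a 1 1 * gammaC a 0 0 = 0) ∧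
    (gammaB a 1 1 * gammaC a 0 1 = 0) ∧
    (gammaB a 1 1 * gammaC a 1 0 = 0) ∧
    (gammaB a 1 1 * gammaC a 1 1 = 0) := by
  have h000 := congrFun (congrFun (congrFun h 0) 0) 0
  have h001 := congrFun (congrFun (congrFun h 0) 0) 1
  have h010 := congrFun (congrFun (congrFun h 0) 1) 0
  have h011 := congrFun (congrFun (congrFun h 0) 1) 1
  have h100 := congrFun (congrFun (congrFun h 1) 0) 0
  have h101 := congrFun (congrFun (congrFun h 1) 0) 1
  have h110 := congrFun (congrFun (congrFun h 1) 1) 0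
  have h111 := congrFun (congrFun (congrFun h 1) 1) 1
  simp only [Trip, gammaA, gammaB, gammaC, Matrix.of_apply, Fin.sum_univ_two,
    eps00, eps01, eps10, eps11, Pi.zero_apply] at h000 h001 h010 h011 h100 h101 h110 h111 ⊢
  exact ⟨by linear_combination ((2:ℂ) * (a 1 0 0)) * h000 + ((-2:ℂ) * (a 0 0 0)) * h100,
    by linear_combination ((2:ℂ) * (a 1 0 1)) * h000 + ((-2:ℂ) * (a 0 0 1)) * h100,
    by linear_combination ((2:ℂ) * (a 1 0 1)) * h000 + ((-2:ℂ) * (a 0 0 1)) * h100,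
    by linear_combination ((2:ℂ) * (a 1 0 1)) * h001 + ((-2:ℂ) * (a 0 0 1)) * h101,
    by linear_combination ((2:ℂ) * (a 1 1 0)) * h000 + ((-2:ℂ) * (a 0 1 0)) * h100,
    by linear_combination ((1:ℂ) * (a 1 1 1)) * h000 + ((1:ℂ) * (a 1 1 0)) * h001 + ((1:ℂ) * (a 1 0 1)) * h010 + ((-1:ℂ) * (a 1 0 0)) * h011 + ((-2:ℂ) * (a 0 1 1)) * h100,
    by linear_combination ((1:ℂ) * (a 1 1 1)) * h000 + ((1:ℂ) * (a 1 1 0)) * h001 + ((1:ℂ) * (a 1 0 1)) * h010 + ((-1:ℂ) * (a 1 0 0)) * h011 + ((-2:ℂ) * (a 0 1 1)) * h100,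
    by linear_combination ((2:ℂ) * (a 1 1 1)) * h001 + ((-2:ℂ) * (a 0 1 1)) * h101,
    by linear_combination ((2:ℂ) * (a 1 1 0)) * h000 + ((-2:ℂ) * (a 0 1 0)) * h100,
    by linear_combination ((1:ℂ) * (a 1 1 1)) * h000 + ((1:ℂ) * (a 1 1 0)) * h001 + ((1:ℂ) * (a 1 0 1)) * h010 + ((-1:ℂ) * (a 1 0 0)) * h011 + ((-2:ℂ) * (a 0 1 1)) * h100,
    by linear_combination ((1:ℂ) * (a 1 1 1)) * h000 + ((1:ℂ) * (a 1 1 0)) * h001 + ((1:ℂ) * (a 1 0 1)) * h010 + ((-1:ℂ) * (a 1 0 0)) * h011 + ((-2:ℂ) * (a 0 1 1)) * h100,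
    by linear_combination ((2:ℂ) * (a 1 1 1)) * h001 + ((-2:ℂ) * (a 0 1 1)) * h101,
    by linear_combination ((2:ℂ) * (a 1 1 0)) * h010 + ((-2:ℂ) * (a 0 1 0)) * h110,
    by linear_combination ((2:ℂ) * (a 1 1 1)) * h010 + ((-2:ℂ) * (a 0 1 1)) * h110,
    by linear_combination ((2:ℂ) * (a 1 1 1)) * h010 + ((-2:ℂ) * (a 0 1 1)) * h110,
    by linear_combination ((2:ℂ) * (a 1 1 1)) * h011 + ((-2:ℂ) * (a 0 1 1)) * h111⟩

lemma keyBC (a : QState) (h : Trip a = 0) (i j k l : Fin 2) :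
    gammaB a i j * gammaC a k l = 0 := by
  obtain ⟨p1,p2,p3,p4,p5,p6,p7,p8,p9,p10,p11,p12,p13,p14,p15,p16⟩ := keyBC' a h
  fin_cases i <;> fin_cases j <;> fin_cases k <;> fin_cases l
  exacts [p1,p2,p3,p4,p5,p6,p7,p8,p9,p10,p11,p12,p13,p14,p15,p16]

lemma nonzero_entry (M : Matrix (Fin 2) (Fin 2) ℂ) (hM : M ≠ 0) :
    ∃ i j, M i j ≠ 0 := by
  by_contra hc
  push_neg at hc
  exact hM (by ext i j; exact hc i j)

/-- if the triple product vanishes, `T(a) = 0`, then at most one of the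
three gamma matrices is nonzero, i.e. at least two of them are the zero matrix. -/
theorem trip_eq_zero_at_most_one_gamma (a : QState) (h : Trip a = 0) :
    (gammaA a = 0 ∧ gammaB a = 0) ∨
    (gammaA a = 0 ∧ gammaC a = 0) ∨
    (gammaB a = 0 ∧ gammaC a = 0) := by
  by_cases hA : gammaA a = 0
  · by_cases hB : gammaB a = 0
    · exact Or.inl ⟨hA, hB⟩
    · obtain ⟨i, j, hij⟩ := nonzero_entry _ hB
      have hC : gammaC a = 0 := by
        ext k l
        exact (mul_eq_zero.mp (keyBC a h i j k l)).resolve_left hij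
      exact Or.inr (Or.inl ⟨hA, hC⟩)
  · obtain ⟨i, j, hij⟩ := nonzero_entry _ hA
    have hB : gammaB a = 0 := by
      ext k l
      exact (mul_eq_zero.mp (keyAB a h i j k l)).resolve_left hij
    have hC : gammaC a = 0 := by
      ext k l
      exact (mul_eq_zero.mp (keyAC a h i j k l)).resolve_left hij
    exact Or.inr (Or.inr ⟨hB, hC⟩)
end

section
/- The rank conditions for three-qubit states are ordered by implication: (i) if all three gamma matrices vanish, γ^A(a) = γ^B(a) = γ^C(a) = 0, then the triple product vanishes, T(a) = 0; and (ii) if the triple product vanishes, T(a) = 0, then Cayley's hyperdeterminant vanishes, Det a = 0. -/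
open scoped BigOperators

/-- the rank conditions are ordered by implication: vanishing of all
three gamma matrices implies vanishing of the triple product, which in turn implies
vanishing of Cayley's hyperdeterminant. -/
theorem rank_conditions_ordered (a : QState) :
    (gammaA a = 0 ∧ gammaB a = 0 ∧ gammaC a = 0 → Trip a = 0) ∧
    (Trip a = 0 → CayleyDet a = 0) := by
  constructor
  · rintro ⟨hA, -, -⟩
    funext A B C
    simp [Trip, hA]
  · intro h
    have key : symp a (Trip a) = -2 * CayleyDet a := by
      simp only [symp, Trip, gammaA, eps, CayleyDet, Matrix.of_apply,
        Fin.sum_univ_succ, Fin.sum_univ_zero]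
      norm_num
      ring
    have h0 : symp a (Trip a) = 0 := by
      rw [h]
      simp [symp]
    rw [h0] at key
    linear_combination key/2
end

section
/- A nonzero three-qubit state a is totally separable (rank 1) if and only if all three gamma matrices vanish: for a ≠ 0, one has γ^A(a) = γ^B(a) = γ^C(a) = 0 if and only if there exist vectors x, y, z ∈ ℂ² with a_{ABC} = x_A y_B z_C for all A, B, C. -/
open scoped BigOperators

/-- a nonzero three-qubit state is totally separable (rank 1) iff all
three gamma matrices vanish. -/
theorem rank_one_iff_separable (a : QState) (ha : a ≠ 0) :
    (gammaA a = 0 ∧ gammaB a = 0 ∧ gammaC a = 0) ↔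
      ∃ x y z : Fin 2 → ℂ, ∀ A B C : Fin 2, a A B C = x A * y B * z C := by
  constructor
  · rintro ⟨hA, hB, hC⟩
    have gA00 : gammaA a 0 0 = 0 := by rw [hA]; rfl
    have gA11 : gammaA a 1 1 = 0 := by rw [hA]; rfl
    have gA01 : gammaA a 0 1 = 0 := by rw [hA]; rfl
    have gB00 : gammaB a 0 0 = 0 := by rw [hB]; rfl
    have gB11 : gammaB a 1 1 = 0 := by rw [hB]; rfl
    have gB01 : gammaB a 0 1 = 0 := by rw [hB]; rfl
    have gC00 : gammaC a 0 0 = 0 := by rw [hC]; rfl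
    have gC11 : gammaC a 1 1 = 0 := by rw [hC]; rfl
    simp only [gammaA, gammaB, gammaC, Matrix.of_apply, Fin.sum_univ_two, eps] at gA00 gA11 gA01 gB00 gB11 gB01 gC00 gC11
    norm_num at gA00 gA11 gA01 gB00 gB11 gB01 gC00 gC11
    have m1 : a 0 0 0 * a 0 1 1 = a 0 0 1 * a 0 1 0 := by linear_combination (1/2 : ℂ) * gA00
    have m2 : a 1 0 0 * a 1 1 1 = a 1 0 1 * a 1 1 0 := by linear_combination (1/2 : ℂ) * gA11
    have m3 : a 0 0 0 * a 1 0 1 = a 0 0 1 * a 1 0 0 := by linear_combination (1/2 : ℂ) * gB00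
    have m4 : a 0 1 0 * a 1 1 1 = a 0 1 1 * a 1 1 0 := by linear_combination (1/2 : ℂ) * gB11
    have m5 : a 0 0 0 * a 1 1 1 = a 0 0 1 * a 1 1 0 := by
      linear_combination (1/2 : ℂ) * gA01 + (1/2 : ℂ) * gB01
    have m6 : a 0 1 0 * a 1 0 1 = a 0 1 1 * a 1 0 0 := by
      linear_combination (1/2 : ℂ) * gB01 - (1/2 : ℂ) * gA01
    have m7 : a 0 0 0 * a 1 1 0 = a 0 1 0 * a 1 0 0 := by linear_combination (1/2 : ℂ) * gC00
    have m8 : a 0 0 1 * a 1 1 1 = a 0 1 1 * a 1 0 1 := by linear_combination (1/2 : ℂ) * gC11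
    have fin2 : ∀ i : Fin 2, i = 0 ∨ i = 1 := by decide
    have step1 : ∀ A p B q r : Fin 2, a A q r * a p B r = a A B r * a p q r := by
      intro A p B q r
      rcases fin2 A with rfl | rfl <;> rcases fin2 p with rfl | rfl <;>
        rcases fin2 B with rfl | rfl <;> rcases fin2 q with rfl | rfl <;>
        rcases fin2 r with rfl | rfl <;>
        first
          | ring1
          | linear_combination m7
          | linear_combination -m7
          | linear_combination m8
          | linear_combination -m8
    have step2 : ∀ A B p q r C : Fin 2, a A B r * a p q C = a A B C * a p q r := by
      intro A B p q r C
      rcases fin2 A with rfl | rfl <;> rcases fin2 B with rfl | rfl <;>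
        rcases fin2 p with rfl | rfl <;> rcases fin2 q with rfl | rfl <;>
        rcases fin2 r with rfl | rfl <;> rcases fin2 C with rfl | rfl <;>
        first
          | ring1
          | linear_combination m1
          | linear_combination -m1
          | linear_combination m2
          | linear_combination -m2
          | linear_combination m3
          | linear_combination -m3
          | linear_combination m4
          | linear_combination -m4
          | linear_combination m5
          | linear_combination -m5
          | linear_combination m6
          | linear_combination -m6
    have hne : ∃ p q r : Fin 2, a p q r ≠ 0 := by
      by_contra hcon
      push_neg at hcon
      exact ha (funext fun p => funext fun q => funext fun r => hcon p q r)
    obtain ⟨p, q, r, hpqr⟩ := hne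
    refine ⟨fun A => a A q r, fun B => a p B r,
      fun C => a p q C * (a p q r)⁻¹ * (a p q r)⁻¹, fun A B C => ?_⟩
    field_simp
    linear_combination (-(a p q C)) * step1 A p B q r + (-(a p q r)) * step2 A B p q r C
  · rintro ⟨x, y, z, hxyz⟩
    refine ⟨?_, ?_, ?_⟩ <;> ext i j <;>
      · simp only [gammaA, gammaB, gammaC, Matrix.of_apply, Fin.sum_univ_two, eps,
          hxyz, Matrix.zero_apply]
        fin_cases i <;> fin_cases j <;> norm_num <;> ring
end

section
/- If a three-qubit state a satisfies the rank-2a conditions T(a) = 0 and γ^A(a) ≠ 0, then γ^B(a) = 0 and γ^C(a) = 0, and a is biseparable along the A–BC split: there exist a vector x ∈ ℂ² and a tensor φ = (φ_{BC}) with a_{ABC} = x_A φ_{BC} for all A, B, C. -/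
open scoped BigOperators

/-- a rank-2a state (`T(a) = 0` and `γ^A(a) ≠ 0`) has
`γ^B(a) = 0 = γ^C(a)` and is biseparable along the A–BC split. -/
theorem rank_two_a_biseparable (a : QState) (hT : Trip a = 0) (hA : gammaA a ≠ 0) :
    gammaB a = 0 ∧ gammaC a = 0 ∧
      ∃ (x : Fin 2 → ℂ) (φ : Fin 2 → Fin 2 → ℂ),
        ∀ A B C : Fin 2, a A B C = x A * φ B C := by
  -- key linear relations from T(a) = 0
  have hkey : ∀ A3 B C : Fin 2, a 0 B C * gammaA a 1 A3 = a 1 B C * gammaA a 0 A3 := by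
    intro A3 B C
    have h := congrFun (congrFun (congrFun hT A3) B) C
    simp only [Trip, Fin.sum_univ_two, Pi.zero_apply] at h
    norm_num [eps] at h
    linear_combination h
  have hex : ∃ i j, gammaA a i j ≠ 0 := by
    by_contra h
    push_neg at h
    exact hA (by ext i j; simpa using h i j)
  obtain ⟨i, j, hij⟩ := hex
  obtain ⟨x, φ, hfac⟩ : ∃ (x : Fin 2 → ℂ) (φ : Fin 2 → Fin 2 → ℂ),
      ∀ A B C : Fin 2, a A B C = x A * φ B C := by
    fin_cases i
    · replace hij : gammaA a 0 j ≠ 0 := hij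
      refine ⟨fun A => gammaA a A j / gammaA a 0 j, a 0, ?_⟩
      intro A B C
      fin_cases A
      · show a 0 B C = gammaA a 0 j / gammaA a 0 j * a 0 B C
        rw [div_self hij, one_mul]
      · show a 1 B C = gammaA a 1 j / gammaA a 0 j * a 0 B C
        rw [div_mul_eq_mul_div, eq_div_iff hij]
        linear_combination -hkey j B C
    · replace hij : gammaA a 1 j ≠ 0 := hij
      refine ⟨fun A => gammaA a A j / gammaA a 1 j, a 1, ?_⟩
      intro A B C
      fin_cases A
      · show a 0 B C = gammaA a 0 j / gammaA a 1 j * a 1 B C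
        rw [div_mul_eq_mul_div, eq_div_iff hij]
        linear_combination hkey j B C
      · show a 1 B C = gammaA a 1 j / gammaA a 1 j * a 1 B C
        rw [div_self hij, one_mul]
  refine ⟨?_, ?_, x, φ, hfac⟩
  · ext B1 B2
    simp only [gammaB, Matrix.of_apply, Fin.sum_univ_two, hfac, Matrix.zero_apply]
    norm_num [eps]
    ring
  · ext C1 C2
    simp only [gammaC, Matrix.of_apply, Fin.sum_univ_two, hfac, Matrix.zero_apply]
    norm_num [eps]
    ring
end

section
/- The gamma matrix γ^A transforms covariantly under local linear transformations: for any 2×2 complex matrices R, S, T and the transformed state a'_{ABC} = Σ_{A',B',C'} R_{AA'} S_{BB'} T_{CC'} a_{A'B'C'}, one has γ^A(a') = det(S) det(T) · R γ^A(a) Rᵀ, and analogously γ^B(a') = det(T) det(R) · S γ^B(a) Sᵀ and γ^C(a') = det(R) det(S) · T γ^C(a) Tᵀ. -/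
open scoped BigOperators
set_option maxHeartbeats 4000000

/-- Local transformation of a state by 2×2 matrices acting on the three slots:
`a'_{ABC} = Σ R_{AA'} S_{BB'} T_{CC'} a_{A'B'C'}`. -/
noncomputable def transform (R S T : Matrix (Fin 2) (Fin 2) ℂ) (a : QState) : QState :=
  fun A B C => ∑ A', ∑ B', ∑ C', R A A' * S B B' * T C C' * a A' B' C'

/-- the gamma matrices transform covariantly under local linear
transformations: `γ^A(a') = det(S) det(T) · R γ^A(a) R.transpose` and analogously for
`γ^B` and `γ^C`. -/
theorem gamma_covariance (R S T : Matrix (Fin 2) (Fin 2) ℂ) (a : QState) :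
    gammaA (transform R S T a) = (S.det * T.det) • (R * gammaA a * R.transpose) ∧
    gammaB (transform R S T a) = (T.det * R.det) • (S * gammaB a * S.transpose) ∧
    gammaC (transform R S T a) = (R.det * S.det) • (T * gammaC a * T.transpose) := by
  refine ⟨?_, ?_, ?_⟩ <;>
  · ext i j
    fin_cases i <;> fin_cases j <;>
    · simp only [gammaA, gammaB, gammaC, transform, eps, Matrix.det_fin_two,
        Matrix.smul_apply, Matrix.mul_apply, Matrix.transpose_apply, Matrix.of_apply,
        Fin.sum_univ_two, smul_eq_mul, Fin.isValue]
      norm_num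
      ring
end

section
/- Cayley's hyperdeterminant is a relative invariant under local linear transformations: for any 2×2 complex matrices R, S, T and the transformed state a'_{ABC} = Σ_{A',B',C'} R_{AA'} S_{BB'} T_{CC'} a_{A'B'C'}, one has Det a' = (det R)² (det S)² (det T)² · Det a. In particular Det is invariant under SL(2,ℂ) × SL(2,ℂ) × SL(2,ℂ). -/
open scoped BigOperators

lemma transform_decomp (R S T : Matrix (Fin 2) (Fin 2) ℂ) (a : QState) :
    transform R S T a = transform R 1 1 (transform 1 S 1 (transform 1 1 T a)) := by
  funext A B C
  simp [transform, Matrix.one_apply, Fin.sum_univ_two]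
  ring

lemma cayley_R (R : Matrix (Fin 2) (Fin 2) ℂ) (a : QState) :
    CayleyDet (transform R 1 1 a) = R.det ^ 2 * CayleyDet a := by
  simp [CayleyDet, transform, Matrix.one_apply, Fin.sum_univ_two, Matrix.det_fin_two]
  ring

lemma cayley_S (S : Matrix (Fin 2) (Fin 2) ℂ) (a : QState) :
    CayleyDet (transform 1 S 1 a) = S.det ^ 2 * CayleyDet a := by
  simp [CayleyDet, transform, Matrix.one_apply, Fin.sum_univ_two, Matrix.det_fin_two]
  ring

lemma cayley_T (T : Matrix (Fin 2) (Fin 2) ℂ) (a : QState) :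
    CayleyDet (transform 1 1 T a) = T.det ^ 2 * CayleyDet a := by
  simp [CayleyDet, transform, Matrix.one_apply, Fin.sum_univ_two, Matrix.det_fin_two]
  ring

/-- Cayley's hyperdeterminant is a relative invariant under local
linear transformations, and in particular is invariant under
`SL(2,ℂ) × SL(2,ℂ) × SL(2,ℂ)`. -/
theorem hyperdet_relative_invariant :
    (∀ (R S T : Matrix (Fin 2) (Fin 2) ℂ) (a : QState),
      CayleyDet (transform R S T a) = R.det ^ 2 * S.det ^ 2 * T.det ^ 2 * CayleyDet a) ∧
    (∀ (R S T : Matrix (Fin 2) (Fin 2) ℂ) (a : QState),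
      R.det = 1 → S.det = 1 → T.det = 1 →
      CayleyDet (transform R S T a) = CayleyDet a) := by
  have main : ∀ (R S T : Matrix (Fin 2) (Fin 2) ℂ) (a : QState),
      CayleyDet (transform R S T a) = R.det ^ 2 * S.det ^ 2 * T.det ^ 2 * CayleyDet a := by
    intro R S T a
    rw [transform_decomp, cayley_R, cayley_S, cayley_T]
    ring
  refine ⟨main, fun R S T a hR hS hT => ?_⟩
  rw [main, hR, hS, hT]
  ring
end

section
/- The triple product transforms covariantly under local linear transformations: for any 2×2 complex matrices R, S, T and the transformed state a'_{ABC} = Σ_{A',B',C'} R_{AA'} S_{BB'} T_{CC'} a_{A'B'C'}, one has T(a')_{ABC} = det(R) det(S) det(T) · Σ_{A',B',C'} R_{AA'} S_{BB'} T_{CC'} T(a)_{A'B'C'}. In particular T commutes with the action of SL(2,ℂ) × SL(2,ℂ) × SL(2,ℂ). -/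
open scoped BigOperators

set_option maxHeartbeats 4000000 in
/-- the triple product transforms covariantly under local linear
transformations:
`T(a')_{ABC} = det(R) det(S) det(T) · Σ R_{AA'} S_{BB'} T_{CC'} T(a)_{A'B'C'}`;
in particular it commutes with the action of `SL(2,ℂ) × SL(2,ℂ) × SL(2,ℂ)`. -/
theorem trip_covariance (R S T : Matrix (Fin 2) (Fin 2) ℂ) (a : QState) :
    ∀ A B C : Fin 2,
      Trip (transform R S T a) A B C =
        R.det * S.det * T.det * transform R S T (Trip a) A B C := by
  intro A B C
  fin_cases A <;> fin_cases B <;> fin_cases C <;>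
    (simp only [Trip, transform, gammaA, eps, Matrix.det_fin_two, Matrix.of_apply,
      Fin.sum_univ_two, Fin.isValue]; norm_num; ring)
end

section
/- In any Freudenthal triple system, for every x the linear map Υ_x defined by Υ_x(y) = 3T(x,x,y) + B(x,y)·x satisfies the infinitesimal automorphism conditions: (i) B(Υ_x(y), z) + B(y, Υ_x(z)) = 0 for all y, z, and (ii) q(Υ_x(y), y, y, y) = 0 for all y. -/
/-- A Freudenthal triple system over a field `𝔽` (characteristic assumptions are
imposed at the point of use): a vector space `V` with a nondegenerate antisymmetric
bilinear form `B`, a symmetric four-linear form `q` that is not identically zero,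
and the symmetric trilinear ternary product `T` determined by
`B (T x y z) w = q x y z w`, satisfying the defining axiom
`3 B(T(x,x,y), T(y,y,y)) = B(x,y) q(x,y,y,y)`. -/
structure FTS (𝔽 : Type*) [Field 𝔽] (V : Type*) [AddCommGroup V] [Module 𝔽 V] where
  B : V →ₗ[𝔽] V →ₗ[𝔽] 𝔽
  q : V →ₗ[𝔽] V →ₗ[𝔽] V →ₗ[𝔽] V →ₗ[𝔽] 𝔽
  T : V →ₗ[𝔽] V →ₗ[𝔽] V →ₗ[𝔽] V
  B_antisymm : ∀ x y, B x y = - B y x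
  B_nondeg : ∀ x, (∀ y, B x y = 0) → x = 0
  q_symm : ∀ (σ : Equiv.Perm (Fin 4)) (v : Fin 4 → V),
    q (v (σ 0)) (v (σ 1)) (v (σ 2)) (v (σ 3)) = q (v 0) (v 1) (v 2) (v 3)
  q_ne_zero : ∃ x y z w, q x y z w ≠ 0
  BT_eq_q : ∀ x y z w, B (T x y z) w = q x y z w
  fts_axiom : ∀ x y, (3 : 𝔽) * B (T x x y) (T y y y) = B x y * q x y y y

/-- in any Freudenthal triple system, for every `x` the linear map
`Υ_x(y) = 3 T(x,x,y) + B(x,y)·x` satisfies the infinitesimal automorphism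
conditions: (i) `B(Υ_x y, z) + B(y, Υ_x z) = 0` and (ii) `q(Υ_x y, y, y, y) = 0`. -/
theorem upsilon_infinitesimal_automorphism
    {𝔽 : Type*} [Field 𝔽] {V : Type*} [AddCommGroup V] [Module 𝔽 V]
    [FiniteDimensional 𝔽 V] (h2 : (2 : 𝔽) ≠ 0) (h3 : (3 : 𝔽) ≠ 0)
    (𝓕 : FTS 𝔽 V) (x : V) :
    (∀ y z : V,
      𝓕.B ((3 : 𝔽) • 𝓕.T x x y + 𝓕.B x y • x) z
        + 𝓕.B y ((3 : 𝔽) • 𝓕.T x x z + 𝓕.B x z • x) = 0) ∧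
    (∀ y : V, 𝓕.q ((3 : 𝔽) • 𝓕.T x x y + 𝓕.B x y • x) y y y = 0) := by
  have qrot : ∀ a b c d : V, 𝓕.q a b c d = 𝓕.q d a b c := by
    intro a b c d
    have := 𝓕.q_symm (finRotate 4) ![d, a, b, c]
    simpa using this
  constructor
  · intro y z
    have h1 : 𝓕.B y (𝓕.T x x z) = - 𝓕.q x x y z := by
      rw [𝓕.B_antisymm, 𝓕.BT_eq_q]
      have := 𝓕.q_symm (Equiv.swap 2 3) ![x, x, y, z]
      simp only [Equiv.swap_apply_def] at this
      simpa using this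
    simp only [map_add, map_smul, LinearMap.add_apply, LinearMap.smul_apply,
      smul_eq_mul]
    rw [𝓕.BT_eq_q, h1, 𝓕.B_antisymm y x]
    ring
  · intro y
    have e1 : 𝓕.q (𝓕.T x x y) y y y = - 𝓕.B (𝓕.T x x y) (𝓕.T y y y) := by
      rw [← qrot, ← 𝓕.BT_eq_q, 𝓕.B_antisymm]
    have key : (3 : 𝔽) * 𝓕.q (𝓕.T x x y) y y y = - (𝓕.B x y * 𝓕.q x y y y) := by
      rw [e1]
      linear_combination - 𝓕.fts_axiom x y
    simp only [map_add, map_smul, LinearMap.add_apply, LinearMap.smul_apply,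
      smul_eq_mul]
    linear_combination key
end

section
/- No classical deterministic strategy wins the three-player game with certainty, and the optimum is 3/4: (i) there are no functions f, g, h : Bool → Bool satisfying simultaneously f(0)⊕g(0)⊕h(0) = 0, f(1)⊕g(1)⊕h(0) = 1, f(1)⊕g(0)⊕h(1) = 1, and f(0)⊕g(1)⊕h(1) = 1 (⊕ being addition mod 2); hence every triple of functions (f,g,h) satisfies at most 3 of these 4 equations; (ii) the constant functions f = g = h = 1 satisfy exactly 3 of the 4 equations. -/
/-- The number (out of 4) of the three-player game's winning conditions satisfied by
the deterministic strategy `(f, g, h)`. -/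
def score (f g h : Bool → Bool) : ℕ :=
  (if xor (f false) (xor (g false) (h false)) = false then 1 else 0) +
  (if xor (f true) (xor (g true) (h false)) = true then 1 else 0) +
  (if xor (f true) (xor (g false) (h true)) = true then 1 else 0) +
  (if xor (f false) (xor (g true) (h true)) = true then 1 else 0)

/-- no classical deterministic strategy wins the three-player game with
certainty, every strategy satisfies at most 3 of the 4 winning conditions, and the
constant strategy `f = g = h = 1` satisfies exactly 3 of them. -/
theorem classical_optimum_three_quarters :
    (¬ ∃ f g h : Bool → Bool,
      xor (f false) (xor (g false) (h false)) = false ∧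
      xor (f true) (xor (g true) (h false)) = true ∧
      xor (f true) (xor (g false) (h true)) = true ∧
      xor (f false) (xor (g true) (h true)) = true) ∧
    (∀ f g h : Bool → Bool, score f g h ≤ 3) ∧
    score (fun _ => true) (fun _ => true) (fun _ => true) = 3 := by
  refine ⟨?_, ?_, by decide⟩
  · rintro ⟨f, g, h, h1, h2, h3, h4⟩
    revert h1 h2 h3 h4
    cases hf0 : f false <;> cases hf1 : f true <;> cases hg0 : g false <;>
      cases hg1 : g true <;> cases hh0 : h false <;> cases hh1 : h true <;> simp
  · intro f g h
    unfold score
    cases hf0 : f false <;> cases hf1 : f true <;> cases hg0 : g false <;>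
      cases hg1 : g true <;> cases hh0 : h false <;> cases hh1 : h true <;> simp
end
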